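/- arXiv:2106.15628 — 2 statements merged into one kernel-verified Lean document; each statement's English description precedes it below -/
import Mathlib

section
/- In the Clifford Hayden–Preskill setup, the purity of the reduced state on R C satisfies Tr(ρ_{RC}^2) = N_{I_D} / (d_R d_C), where N_{I_D} is the number of Pauli operators P_A on A with Λ_D(P_A) ≃ I_D. Equivalently, the Rényi-2 entropy is S^{(2)}_{RC} = log(d_C d_R / N_{I_D}). -/
/-!
Since `ρ_RC` is Hermitian, `Tr ρ_RC²` is the sum of `|ρ_RC|²` over all entries. For fixed
`C`-indices `c, c'` expand the `A`-block of `ρ_RC` in the Pauli basis, which is orthogonal with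
all squared norms `d_A`, so Parseval applies. The coefficient of `P_A` is, up to `1/(d_A d_B)`,
the `(c, c')` entry of the partial trace over `D` of `U(P_A ⊗ I_B)U† = c · Λ_C ⊗ Λ_D`, namely
`c · Λ_C(c, c') · Tr Λ_D`; here `Tr Λ_D` is `d_D` if `Λ_D ≃ I_D` and `0` otherwise. Summing
`|Λ_C(c, c')|²` over `c, c'` gives `d_C`, hence `d_A Tr ρ_RC² = N_{I_D} d_C d_D² / (d_A d_B)²`,
and unitarity gives `d_A d_B = d_C d_D`.
-/

open Matrix Kronecker BigOperators

/-- The `n`-qubit Pauli operator `X^x Z^z` (symplectic representation). -/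
noncomputable def pauli {n : ℕ} (x z : Fin n → ZMod 2) :
    Matrix (Fin n → ZMod 2) (Fin n → ZMod 2) ℂ :=
  fun j k => if j = k + x then ((-1 : ℂ)) ^ (∑ i, (z i * k i).val) else 0

/-- Reduced density matrix `ρ_{RC}` of the Hayden–Preskill state
`|Ψ⟩ = (I_R ⊗ U ⊗ I_{B̄})(|EPR⟩_{RA} ⊗ |EPR⟩_{BB̄})`, obtained by tracing
out `D` and `B̄`; concretely `Ψ(r,(c,d),b̄) = U_{(c,d),(r,b̄)}/√(d_A d_B)`. -/
noncomputable def rhoRC (nA nB nC nD : ℕ)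
    (U : Matrix ((Fin nC → ZMod 2) × (Fin nD → ZMod 2))
      ((Fin nA → ZMod 2) × (Fin nB → ZMod 2)) ℂ) :
    Matrix ((Fin nA → ZMod 2) × (Fin nC → ZMod 2))
      ((Fin nA → ZMod 2) × (Fin nC → ZMod 2)) ℂ :=
  fun p q => ((2 ^ nA * 2 ^ nB : ℂ))⁻¹ *
    ∑ d : Fin nD → ZMod 2, ∑ b : Fin nB → ZMod 2,
      U (p.2, d) (p.1, b) * (starRingEnd ℂ) (U (q.2, d) (q.1, b))

lemma neg_one_pow_val_add (u v : ZMod 2) :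
    (-1 : ℂ) ^ (u + v).val = (-1) ^ u.val * (-1) ^ v.val := by
  rw [← pow_add, ZMod.val_add, ← neg_one_pow_eq_pow_mod_two]

lemma sum_neg_one_pow_val_mul (u : ZMod 2) :
    ∑ t : ZMod 2, (-1 : ℂ) ^ (t * u).val = if u = 0 then 2 else 0 := by
  rw [show (Finset.univ : Finset (ZMod 2)) = {0, 1} by decide, Finset.sum_pair zero_ne_one]
  obtain rfl | rfl : u = 0 ∨ u = 1 := by revert u; decide
  · norm_num
  · norm_num [ZMod.val_one]

section Pauli

variable {n : ℕ}

lemma neg_one_pow_sum_val_mul_add (z a b : Fin n → ZMod 2) :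
    (-1 : ℂ) ^ (∑ i, (z i * (a + b) i).val)
      = (-1) ^ (∑ i, (z i * a i).val) * (-1) ^ (∑ i, (z i * b i).val) := by
  simp only [← Finset.prod_pow_eq_pow_sum, ← Finset.prod_mul_distrib, Pi.add_apply, mul_add,
    neg_one_pow_val_add]

lemma sum_neg_one_pow_sum_val_mul (w : Fin n → ZMod 2) :
    ∑ z : Fin n → ZMod 2, (-1 : ℂ) ^ (∑ i, (z i * w i).val) = if w = 0 then 2 ^ n else 0 := by
  simp only [← Finset.prod_pow_eq_pow_sum]
  rw [← Fintype.prod_sum fun i t => (-1 : ℂ) ^ (t * w i).val]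
  simp only [sum_neg_one_pow_val_mul, Fintype.prod_ite_zero, funext_iff, Pi.zero_apply,
    Finset.prod_const, Finset.card_univ, Fintype.card_fin]

lemma conj_pauli (x z j k : Fin n → ZMod 2) :
    starRingEnd ℂ (pauli x z j k) = pauli x z j k := by
  unfold pauli
  split_ifs <;> simp

lemma sum_pauli_mul_pauli (u v : (Fin n → ZMod 2) × (Fin n → ZMod 2)) :
    ∑ w : (Fin n → ZMod 2) × (Fin n → ZMod 2), pauli w.1 w.2 u.1 u.2 * pauli w.1 w.2 v.1 v.2
      = if u = v then 2 ^ n else 0 := by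
  obtain ⟨a, a'⟩ := u
  obtain ⟨j, k⟩ := v
  have hx : ∀ x : Fin n → ZMod 2, a = a' + x ↔ x = a - a' := fun x => by
    rw [eq_sub_iff_add_eq', eq_comm]
  have hk : a' + k = 0 ↔ a' = k := by
    rw [add_eq_zero_iff_eq_neg, show -k = k from funext fun i => ZMod.neg_eq_self_mod_two _]
  simp only [pauli, Fintype.sum_prod_type, ite_mul, mul_ite, zero_mul, mul_zero, hx, hk,
    ← neg_one_pow_sum_val_mul_add, Finset.sum_ite_irrel, Finset.sum_const_zero,
    sum_neg_one_pow_sum_val_mul]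
  rw [Fintype.sum_eq_single (a - a') fun x hx' => by simp [hx']]
  by_cases h : a' = k
  · subst h
    simp [eq_comm]
  · simp [h]

lemma trace_pauli (x z : Fin n → ZMod 2) :
    (pauli x z).trace = if x = 0 ∧ z = 0 then 2 ^ n else 0 := by
  by_cases hx : x = 0
  · subst hx
    simp only [trace, diag, pauli, add_zero, if_true, true_and]
    simp_rw [mul_comm (z _)]
    exact sum_neg_one_pow_sum_val_mul z
  · simp [trace, pauli, hx]

lemma sum_norm_sq_pauli (x z : Fin n → ZMod 2) :
    ∑ j, ∑ k, ‖pauli x z j k‖ ^ 2 = 2 ^ n := by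
  have hcol : ∀ k : Fin n → ZMod 2, ∑ j, ‖pauli x z j k‖ ^ 2 = 1 := fun k => by
    simp [pauli, apply_ite]
  simp [Finset.sum_comm (γ := Fin n → ZMod 2), hcol]

end Pauli

lemma star_dotProduct_self_eq_sum_norm_sq {𝕜 ι : Type*} [RCLike 𝕜] [Fintype ι] (v : ι → 𝕜) :
    star v ⬝ᵥ v = ((∑ i, ‖v i‖ ^ 2 : ℝ) : 𝕜) := by
  simp [dotProduct, RCLike.conj_mul]

lemma sum_norm_sq_mulVec {𝕜 ι κ : Type*} [RCLike 𝕜] [Fintype ι] [Fintype κ] [DecidableEq κ]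
    {T : Matrix ι κ 𝕜} {r : ℝ} (hT : Tᴴ * T = (r : 𝕜) • 1) (v : κ → 𝕜) :
    ∑ i, ‖(T *ᵥ v) i‖ ^ 2 = r * ∑ k, ‖v k‖ ^ 2 := by
  apply RCLike.ofReal_injective (K := 𝕜)
  rw [RCLike.ofReal_mul, ← star_dotProduct_self_eq_sum_norm_sq,
    ← star_dotProduct_self_eq_sum_norm_sq, star_mulVec, ← dotProduct_mulVec, mulVec_mulVec, hT,
    smul_mulVec, one_mulVec, dotProduct_smul, smul_eq_mul]

lemma sum_prod_sum_prod_comm {α γ M : Type*} [Fintype α] [Fintype γ] [AddCommMonoid M]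
    (f : α × γ → α × γ → M) :
    ∑ p, ∑ q, f p q = ∑ c, ∑ c', ∑ u : α × α, f (u.1, c) (u.2, c') := by
  simp only [Fintype.sum_prod_type]
  rw [Finset.sum_comm]
  refine Finset.sum_congr rfl fun c _ => ?_
  calc _ = ∑ a, ∑ c', ∑ a', f (a, c) (a', c') := Finset.sum_congr rfl fun a _ => Finset.sum_comm
    _ = _ := Finset.sum_comm

lemma mul_kronecker_one_mul_conjTranspose_apply {ι α β : Type*} [Fintype α] [Fintype β]
    [DecidableEq β] (U : Matrix ι (α × β) ℂ) (P : Matrix α α ℂ) (r s : ι) :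
    (U * (P ⊗ₖ (1 : Matrix β β ℂ)) * Uᴴ) r s
      = ∑ u : α × α, P u.1 u.2 * ∑ b, U r (u.1, b) * star (U s (u.2, b)) := by
  simp only [mul_apply, conjTranspose_apply, kroneckerMap_apply, one_apply, Fintype.sum_prod_type,
    mul_ite, mul_one, mul_zero, Finset.sum_ite_eq', Finset.mem_univ, if_true, Finset.mul_sum,
    Finset.sum_mul]
  calc _ = ∑ a', ∑ a, ∑ b, U r (a, b) * P a a' * star (U s (a', b)) :=
        Finset.sum_congr rfl fun _ _ => Finset.sum_comm
    _ = _ := Finset.sum_comm.trans <| Finset.sum_congr rfl fun a _ =>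
        Finset.sum_congr rfl fun a' _ => Finset.sum_congr rfl fun b _ => by ring

noncomputable def pauliTransform (n : ℕ) :
    Matrix ((Fin n → ZMod 2) × (Fin n → ZMod 2)) ((Fin n → ZMod 2) × (Fin n → ZMod 2)) ℂ :=
  fun w u => pauli w.1 w.2 u.1 u.2

lemma pauliTransform_conjTranspose_mul_self (n : ℕ) :
    (pauliTransform n)ᴴ * pauliTransform n = ((2 ^ n : ℝ) : ℂ) • 1 := by
  ext u v
  simp [mul_apply, pauliTransform, conj_pauli, sum_pauli_mul_pauli, one_apply]

lemma sum_norm_sq_pauliTransform_mulVec {n : ℕ}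
    (v : (Fin n → ZMod 2) × (Fin n → ZMod 2) → ℂ) :
    ∑ w, ‖(pauliTransform n *ᵥ v) w‖ ^ 2 = 2 ^ n * ∑ u, ‖v u‖ ^ 2 :=
  sum_norm_sq_mulVec (pauliTransform_conjTranspose_mul_self n) v

section HaydenPreskill

variable {nA nB nC nD : ℕ}
  (U : Matrix ((Fin nC → ZMod 2) × (Fin nD → ZMod 2)) ((Fin nA → ZMod 2) × (Fin nB → ZMod 2)) ℂ)

noncomputable def rhoRCBlock (c c' : Fin nC → ZMod 2) :
    (Fin nA → ZMod 2) × (Fin nA → ZMod 2) → ℂ :=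
  fun u => rhoRC nA nB nC nD U (u.1, c) (u.2, c')

lemma conj_rhoRC (p q : (Fin nA → ZMod 2) × (Fin nC → ZMod 2)) :
    starRingEnd ℂ (rhoRC nA nB nC nD U p q) = rhoRC nA nB nC nD U q p := by
  simp only [rhoRC, map_mul, map_inv₀, map_sum, map_pow, map_ofNat, Complex.conj_conj,
    mul_comm (starRingEnd ℂ _)]

lemma trace_rhoRC_mul_self :
    (rhoRC nA nB nC nD U * rhoRC nA nB nC nD U).trace
      = ((∑ c, ∑ c', ∑ u, ‖rhoRCBlock U c c' u‖ ^ 2 : ℝ) : ℂ) := by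
  have hsq : ∀ p q, rhoRC nA nB nC nD U p q * rhoRC nA nB nC nD U q p
      = ‖rhoRC nA nB nC nD U p q‖ ^ 2 := fun p q => by
    rw [← conj_rhoRC U p q, Complex.mul_conj']
  simp only [trace, diag, mul_apply, hsq, sum_prod_sum_prod_comm, rhoRCBlock]
  norm_cast

lemma sum_mul_rhoRCBlock (P : Matrix (Fin nA → ZMod 2) (Fin nA → ZMod 2) ℂ)
    (c c' : Fin nC → ZMod 2) :
    ∑ u, P u.1 u.2 * rhoRCBlock U c c' u
      = (2 ^ nA * 2 ^ nB : ℂ)⁻¹ * ∑ d,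
          (U * (P ⊗ₖ (1 : Matrix (Fin nB → ZMod 2) (Fin nB → ZMod 2) ℂ)) * Uᴴ) (c, d) (c', d) := by
  simp only [mul_kronecker_one_mul_conjTranspose_apply, rhoRCBlock, rhoRC, RCLike.star_def]
  rw [Finset.sum_comm]
  simp only [Finset.mul_sum]
  exact Finset.sum_congr rfl fun u _ => Finset.sum_congr rfl fun d _ =>
    Finset.sum_congr rfl fun b _ => by ring

lemma two_pow_mul_sum_norm_sq_rhoRCBlock :
    2 ^ nA * ∑ c, ∑ c', ∑ u, ‖rhoRCBlock U c c' u‖ ^ 2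
      = ∑ w, ∑ c, ∑ c', ‖(pauliTransform nA *ᵥ rhoRCBlock U c c') w‖ ^ 2 := by
  calc _ = ∑ c, ∑ c', ∑ w, ‖(pauliTransform nA *ᵥ rhoRCBlock U c c') w‖ ^ 2 := by
        rw [Finset.mul_sum]
        refine Finset.sum_congr rfl fun c _ => ?_
        rw [Finset.mul_sum]
        exact Finset.sum_congr rfl fun c' _ => (sum_norm_sq_pauliTransform_mulVec _).symm
    _ = _ := (Finset.sum_congr rfl fun _ _ => Finset.sum_comm).trans Finset.sum_comm

variable {U} {w : (Fin nA → ZMod 2) × (Fin nA → ZMod 2)} {c₀ : ℂ}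
  {xC zC : Fin nC → ZMod 2} {xD zD : Fin nD → ZMod 2}

lemma pauliTransform_mulVec_rhoRCBlock
    (h : U * (pauli w.1 w.2 ⊗ₖ (1 : Matrix (Fin nB → ZMod 2) (Fin nB → ZMod 2) ℂ)) * Uᴴ
      = c₀ • (pauli xC zC ⊗ₖ pauli xD zD)) (c c' : Fin nC → ZMod 2) :
    (pauliTransform nA *ᵥ rhoRCBlock U c c') w
      = (2 ^ nA * 2 ^ nB : ℂ)⁻¹ * (c₀ * pauli xC zC c c' * (pauli xD zD).trace) := by
  rw [mulVec, dotProduct]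
  simp only [pauliTransform]
  rw [sum_mul_rhoRCBlock, h]
  simp only [trace, diag, Matrix.smul_apply, kroneckerMap_apply, smul_eq_mul, Finset.mul_sum,
    mul_assoc]

lemma sum_norm_sq_pauliTransform_mulVec_rhoRCBlock (hc₀ : ‖c₀‖ = 1)
    (h : U * (pauli w.1 w.2 ⊗ₖ (1 : Matrix (Fin nB → ZMod 2) (Fin nB → ZMod 2) ℂ)) * Uᴴ
      = c₀ • (pauli xC zC ⊗ₖ pauli xD zD)) :
    ∑ c, ∑ c', ‖(pauliTransform nA *ᵥ rhoRCBlock U c c') w‖ ^ 2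
      = ((2 ^ nA * 2 ^ nB) ^ 2)⁻¹ * 2 ^ nC * if xD = 0 ∧ zD = 0 then (2 ^ nD) ^ 2 else 0 := by
  simp only [pauliTransform_mulVec_rhoRCBlock h, norm_mul, mul_pow, hc₀, trace_pauli,
    ← Finset.sum_mul, ← Finset.mul_sum, sum_norm_sq_pauli]
  split_ifs <;> simp
  ring

end HaydenPreskill

/-- Purity in the Clifford Hayden–Preskill problem:
`Tr(ρ_{RC}²) = N_{I_D} / (d_R d_C)`, where `N_{I_D}` counts Pauli operators
`P_A` with trivial `D`-component `Λ_D(P_A) ≃ I_D` under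
`U(P_A ⊗ I_B)U† = c • (Λ_C(P_A) ⊗ Λ_D(P_A))`. -/
theorem stmt8 (nA nB nC nD : ℕ)
    (U : Matrix ((Fin nC → ZMod 2) × (Fin nD → ZMod 2))
      ((Fin nA → ZMod 2) × (Fin nB → ZMod 2)) ℂ)
    (hU1 : U * Uᴴ = 1) (hU2 : Uᴴ * U = 1)
    (c : (Fin nA → ZMod 2) → (Fin nA → ZMod 2) → ℂ)
    (xc zc : (Fin nA → ZMod 2) → (Fin nA → ZMod 2) → (Fin nC → ZMod 2))
    (xd zd : (Fin nA → ZMod 2) → (Fin nA → ZMod 2) → (Fin nD → ZMod 2))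
    (hClif : ∀ x z : Fin nA → ZMod 2, ‖c x z‖ = 1 ∧
      U * (pauli x z ⊗ₖ (1 : Matrix (Fin nB → ZMod 2) (Fin nB → ZMod 2) ℂ)) * Uᴴ
        = c x z • (pauli (xc x z) (zc x z) ⊗ₖ pauli (xd x z) (zd x z))) :
    (rhoRC nA nB nC nD U * rhoRC nA nB nC nD U).trace
      = (Fintype.card {PA : (Fin nA → ZMod 2) × (Fin nA → ZMod 2) //
            xd PA.1 PA.2 = 0 ∧ zd PA.1 PA.2 = 0} : ℂ)
          / (2 ^ nA * 2 ^ nC) := by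
  have hdim : (2 : ℝ) ^ nC * 2 ^ nD = 2 ^ nA * 2 ^ nB := by
    have := Matrix.square_of_invertible U Uᴴ hU1 hU2
    simp only [Fintype.card_prod, Fintype.card_fun, ZMod.card, Fintype.card_fin] at this
    exact_mod_cast this
  have hcoeff := fun w : (Fin nA → ZMod 2) × (Fin nA → ZMod 2) =>
    sum_norm_sq_pauliTransform_mulVec_rhoRCBlock (w := w) (hClif w.1 w.2).1 (hClif w.1 w.2).2
  have hpurity := two_pow_mul_sum_norm_sq_rhoRCBlock U
  rw [Fintype.sum_congr _ _ hcoeff, ← Finset.mul_sum, Finset.sum_ite,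
    Finset.sum_const_zero, add_zero, Finset.sum_const, nsmul_eq_mul, ← hdim] at hpurity
  field_simp at hpurity
  rw [trace_rhoRC_mul_self, Fintype.card_subtype, ← Complex.ofReal_natCast, ← hpurity]
  push_cast
  field_simp
end

section
/- In the Clifford Hayden–Preskill setup, perfect decoupling ρ_{RC} = (I_R/d_R) ⊗ (I_C/d_C) holds if and only if the forward time-evolution map Λ_D : Pauli_A → Pauli_D (mod phase) is injective. -/
open Matrix Kronecker BigOperators

/-!
Expanding in the Pauli basis of `A`, the completeness relation of the Paulis turns `ρ_RC` into
`∑ P_A ⊗ Tr_D (U (P_A ⊗ I_B) U†)`, up to the factor `4 ^ nA * 2 ^ nB`. For a Clifford `U` the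
partial trace is `c(P_A) tr(Λ_D(P_A)) Λ_C(P_A)`, and a Pauli is traceless unless it is the identity,
so only the `P_A` in the kernel of `Λ_D` survive. The Paulis are orthogonal, hence linearly
independent, so `ρ_RC` is maximally mixed exactly when that kernel is trivial. Conjugation by a
unitary is multiplicative, which makes `Λ_D` additive on the symplectic labels, and a trivial
kernel is then the same as injectivity.
-/

namespace HaydenPreskill

noncomputable def signChar : AddChar (ZMod 2) ℂ where
  toFun a := (-1) ^ a.val
  map_zero_eq_one' := by simp
  map_add_eq_mul' a b := by
    rw [← pow_add, neg_one_pow_eq_pow_mod_two, neg_one_pow_eq_pow_mod_two (n := _ + _)]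
    congr 1
    fin_cases a <;> fin_cases b <;> rfl

lemma signChar_apply (a : ZMod 2) : signChar a = (-1) ^ a.val := rfl

lemma signChar_injective : Function.Injective signChar := by
  intro a b h
  rw [signChar_apply, signChar_apply] at h
  revert h
  fin_cases a <;> fin_cases b <;> norm_num [ZMod.val] <;> rfl

lemma signChar_sum {ι : Type*} (s : Finset ι) (f : ι → ZMod 2) :
    signChar (∑ i ∈ s, f i) = (-1) ^ (∑ i ∈ s, (f i).val) := by
  classical
  induction s using Finset.induction_on with
  | empty => simp
  | insert i s hi ih =>
    rw [Finset.sum_insert hi, Finset.sum_insert hi, AddChar.map_add_eq_mul, ih, pow_add,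
      signChar_apply]

lemma sum_sum_mul_sum_sum_comm {R ι κ : Type*} [NonUnitalNonAssocSemiring R] [Fintype ι]
    [Fintype κ]    (f : ι → ι → R) (g : ι → ι → κ → κ → R) :
    ∑ i, ∑ j, f i j * ∑ k, ∑ l, g i j k l = ∑ k, ∑ l, ∑ i, ∑ j, f i j * g i j k l := by
  simp only [Finset.mul_sum]
  exact (Finset.sum_congr rfl fun _ _ => Finset.sum_comm).trans <| Finset.sum_comm.trans <|
    Finset.sum_congr rfl fun _ _ =>
      (Finset.sum_congr rfl fun _ _ => Finset.sum_comm).trans Finset.sum_comm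

section Pauli

variable {n : ℕ}

lemma vec_add_eq_zero_iff {v w : Fin n → ZMod 2} : v + w = 0 ↔ v = w := by
  simp only [funext_iff, Pi.add_apply, Pi.zero_apply, CharTwo.add_eq_zero]

noncomputable def pauliSign (z k : Fin n → ZMod 2) : ℂ := signChar (z ⬝ᵥ k)

lemma pauli_apply (x z j k : Fin n → ZMod 2) :
    pauli x z j k = if j = k + x then pauliSign z k else 0 := by
  rw [pauliSign, dotProduct, signChar_sum]; rfl

lemma pauliSign_add_left (z z' k : Fin n → ZMod 2) :
    pauliSign (z + z') k = pauliSign z k * pauliSign z' k := by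
  rw [pauliSign, add_dotProduct, AddChar.map_add_eq_mul]; rfl

lemma pauliSign_add_right (z k k' : Fin n → ZMod 2) :
    pauliSign z (k + k') = pauliSign z k * pauliSign z k' := by
  rw [pauliSign, dotProduct_add, AddChar.map_add_eq_mul]; rfl

lemma pauliSign_comm (z k : Fin n → ZMod 2) : pauliSign z k = pauliSign k z := by
  rw [pauliSign, dotProduct_comm]; rfl

@[simp] lemma pauliSign_zero_left (k : Fin n → ZMod 2) : pauliSign 0 k = 1 := by
  simp [pauliSign]

@[simp] lemma pauliSign_zero_right (z : Fin n → ZMod 2) : pauliSign z 0 = 1 := by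
  simp [pauliSign]

lemma pauliSign_mul_self (z k : Fin n → ZMod 2) : pauliSign z k * pauliSign z k = 1 := by
  rw [← pauliSign_add_left, vec_add_eq_zero_iff.mpr rfl, pauliSign_zero_left]

lemma pauliSign_ne_zero (z k : Fin n → ZMod 2) : pauliSign z k ≠ 0 :=
  left_ne_zero_of_mul_eq_one (pauliSign_mul_self z k)

lemma pauliSign_injective {z z' : Fin n → ZMod 2} (h : ∀ k, pauliSign z k = pauliSign z' k) :
    z = z' := by
  ext i
  simpa [pauliSign, dotProduct_single] using signChar_injective (h (Pi.single i 1))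

lemma sum_pauliSign (z : Fin n → ZMod 2) :
    ∑ k, pauliSign z k = if z = 0 then 2 ^ n else 0 := by
  let ψ : AddChar (Fin n → ZMod 2) ℂ :=
    { toFun := pauliSign z
      map_zero_eq_one' := pauliSign_zero_right z
      map_add_eq_mul' := pauliSign_add_right z }
  have hψ : ψ = 0 ↔ z = 0 := by
    refine ⟨fun h => pauliSign_injective fun k => ?_, fun h => by ext k; simp [ψ, h]⟩
    rw [pauliSign_zero_left]
    exact DFunLike.congr_fun h k
  classical
  simpa [ψ, hψ] using ψ.sum_eq_ite

lemma sum_pauliSign_mul_pauliSign (z z' : Fin n → ZMod 2) :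
    ∑ k, pauliSign z k * pauliSign z' k = if z = z' then 2 ^ n else 0 := by
  simp_rw [← pauliSign_add_left, sum_pauliSign, vec_add_eq_zero_iff]

lemma pauli_zero : pauli (0 : Fin n → ZMod 2) 0 = 1 := by
  ext j k
  simp [pauli_apply, Matrix.one_apply]

lemma pauli_ne_zero (x z : Fin n → ZMod 2) : pauli x z ≠ 0 := fun h =>
  pauliSign_ne_zero z 0 (by simpa [pauli_apply] using congr_fun (congr_fun h x) 0)

lemma trace_pauli (x z : Fin n → ZMod 2) :
    (pauli x z).trace = if x = 0 ∧ z = 0 then 2 ^ n else 0 := by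
  simp only [trace, diag, pauli_apply, left_eq_add]
  by_cases hx : x = 0 <;> simp [hx, sum_pauliSign]

lemma pauli_mul (x z x' z' : Fin n → ZMod 2) :
    pauli x z * pauli x' z' = pauliSign z x' • pauli (x + x') (z + z') := by
  ext j k
  simp only [mul_apply, Matrix.smul_apply, pauli_apply, mul_ite, mul_zero, ite_mul, zero_mul,
    Finset.sum_ite_eq', Finset.mem_univ, if_true, smul_eq_mul, add_assoc, add_comm x' x]
  split_ifs
  · rw [pauliSign_add_right, pauliSign_add_left]; ring
  · rfl

lemma sum_pauli_mul_pauli_apply (a a' b b' : Fin n → ZMod 2) :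
    ∑ x, ∑ z, pauli x z a a' * pauli x z b b' = if a = b ∧ a' = b' then 2 ^ n else 0 := by
  have ha : ∀ x, a = a' + x ↔ x = a - a' := fun x => by rw [eq_sub_iff_add_eq', eq_comm]
  have hz : ∑ z, pauliSign z a' * pauliSign z b' = if a' = b' then 2 ^ n else 0 := by
    simp only [pauliSign_comm _ a', pauliSign_comm _ b', sum_pauliSign_mul_pauliSign]
  rw [Finset.sum_comm]
  simp only [pauli_apply, ite_zero_mul_ite_zero, ha, ite_and, Finset.sum_ite_eq',
    Finset.mem_univ, if_true]
  rw [Finset.sum_ite_irrel, Finset.sum_const_zero, hz]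
  by_cases h : a' = b'
  · subst h; simp [eq_comm]
  · simp [h]

lemma sum_pauli_apply_mul_pauli_apply (x z x' z' : Fin n → ZMod 2) :
    ∑ a, ∑ a', pauli x z a a' * pauli x' z' a a' = if x = x' ∧ z = z' then 2 ^ n else 0 := by
  rw [Finset.sum_comm]
  simp only [pauli_apply, ite_mul, mul_ite, zero_mul, mul_zero, Finset.sum_ite_eq',
    Finset.mem_univ, if_true, add_right_inj, Finset.sum_ite_irrel, Finset.sum_const_zero,
    sum_pauliSign_mul_pauliSign, ite_and, eq_comm (a := x')]

lemma smul_pauli_kronecker_pauli_inj {m : ℕ} {α β : ℂ} (hα : α ≠ 0)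
    {u v u' v' : Fin n → ZMod 2} {s t s' t' : Fin m → ZMod 2}
    (h : α • (pauli u v ⊗ₖ pauli s t) = β • (pauli u' v' ⊗ₖ pauli s' t')) :
    u = u' ∧ v = v' ∧ s = s' ∧ t = t' ∧ α = β := by
  have he : ∀ k₁ k₂, α * (pauliSign v k₁ * pauliSign t k₂) =
      β * ((if u = u' then pauliSign v' k₁ else 0) * (if s = s' then pauliSign t' k₂ else 0)) :=
    fun k₁ k₂ => by
      simpa [pauli_apply, add_comm] using congr_fun (congr_fun h (k₁ + u, k₂ + s)) (k₁, k₂)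
  have h0 := he 0 0
  obtain rfl : u = u' := by
    by_contra hu
    simp [hu, hα] at h0
  obtain rfl : s = s' := by
    by_contra hs
    simp [hs, hα] at h0
  obtain rfl : α = β := by simpa using h0
  refine ⟨rfl, pauliSign_injective fun k => ?_, rfl, pauliSign_injective fun k => ?_, rfl⟩
  · simpa [hα] using he k 0
  · simpa [hα] using he 0 k

lemma sum_pauli_apply_mul_sum_pauli_apply_mul (f : (Fin n → ZMod 2) → (Fin n → ZMod 2) → ℂ)
    (a a' : Fin n → ZMod 2) :
    ∑ x, ∑ z, pauli x z a a' * ∑ s, ∑ r, pauli x z s r * f s r = 2 ^ n * f a a' := by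
  simp only [sum_sum_mul_sum_sum_comm, ← mul_assoc, ← Finset.sum_mul, sum_pauli_mul_pauli_apply]
  simp [ite_and]

lemma sum_pauli_apply_mul_sum_pauli_kronecker_apply {γ γ' : Type*}
    (N : (Fin n → ZMod 2) → (Fin n → ZMod 2) → Matrix γ γ' ℂ) (x z : Fin n → ZMod 2)
    (c : γ) (c' : γ') :
    ∑ a, ∑ a', pauli x z a a' * (∑ x', ∑ z', pauli x' z' ⊗ₖ N x' z') (a, c) (a', c') =
      2 ^ n * N x z c c' := by
  simp only [Matrix.sum_apply, kroneckerMap_apply]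
  rw [sum_sum_mul_sum_sum_comm (fun a a' => pauli x z a a')
    (fun a a' x' z' => pauli x' z' a a' * N x' z' c c')]
  simp only [← mul_assoc, ← Finset.sum_mul, sum_pauli_apply_mul_pauli_apply]
  simp [ite_and]

lemma sum_pauli_kronecker_inj {γ γ' : Type*}
    {N N' : (Fin n → ZMod 2) → (Fin n → ZMod 2) → Matrix γ γ' ℂ} :
    ∑ x, ∑ z, pauli x z ⊗ₖ N x z = ∑ x, ∑ z, pauli x z ⊗ₖ N' x z ↔ N = N' := by
  refine ⟨fun h => ?_, fun h => h ▸ rfl⟩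
  ext x z c c'
  have := sum_pauli_apply_mul_sum_pauli_kronecker_apply N x z c c'
  rw [h, sum_pauli_apply_mul_sum_pauli_kronecker_apply] at this
  exact mul_left_cancel₀ (pow_ne_zero n two_ne_zero) this.symm

lemma one_kronecker_eq_sum_pauli_kronecker {γ : Type*} [DecidableEq γ] (M : Matrix γ γ ℂ) :
    (1 : Matrix (Fin n → ZMod 2) (Fin n → ZMod 2) ℂ) ⊗ₖ M =
      ∑ x, ∑ z, pauli x z ⊗ₖ (if x = 0 ∧ z = 0 then M else 0) := by
  simp [ite_and, apply_ite, pauli_zero]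

end Pauli

section PartialTrace

variable {R γ γ' δ α β : Type*}

def traceRight [AddCommMonoid R] [Fintype δ] (M : Matrix (γ × δ) (γ' × δ) R) : Matrix γ γ' R :=
  fun c c' => ∑ d, M (c, d) (c', d)

lemma traceRight_smul_kronecker [CommSemiring R] [Fintype δ] (r : R) (P : Matrix γ γ' R)
    (Q : Matrix δ δ R) : traceRight (r • (P ⊗ₖ Q)) = (r * Q.trace) • P := by
  ext c c'
  simp [traceRight, trace, Finset.mul_sum, mul_comm, mul_left_comm]

lemma traceRight_mul_kronecker_one_mul_conjTranspose [CommSemiring R] [StarRing R]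
    [Fintype α] [Fintype β] [DecidableEq β] [Fintype δ]
    (U : Matrix (γ × δ) (α × β) R) (P : Matrix α α R) (c c' : γ) :
    traceRight (U * (P ⊗ₖ (1 : Matrix β β R)) * Uᴴ) c c' =
      ∑ s, ∑ r, P s r * ∑ d, ∑ b, U (c, d) (s, b) * star (U (c', d) (r, b)) := by
  simp only [traceRight, mul_apply, conjTranspose_apply, kronecker_apply, one_apply,
    Fintype.sum_prod_type, mul_ite, mul_one, mul_zero, ite_mul, zero_mul,
    Finset.sum_ite_eq', Finset.mem_univ, if_true, Finset.mul_sum, Finset.sum_mul]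
  rw [Finset.sum_comm]
  refine (Finset.sum_congr rfl fun _ _ => Finset.sum_comm_cycle).trans (Finset.sum_comm.trans ?_)
  simp only [mul_comm, mul_assoc]

lemma conj_mul_kronecker_one [CommSemiring R] [StarRing R] [Fintype α] [Fintype β] [Fintype γ]
    [DecidableEq α] [DecidableEq β] {U : Matrix γ (α × β) R} (hU2 : Uᴴ * U = 1)
    (P Q : Matrix α α R) :
    U * ((P * Q) ⊗ₖ (1 : Matrix β β R)) * Uᴴ =
      U * (P ⊗ₖ (1 : Matrix β β R)) * Uᴴ * (U * (Q ⊗ₖ (1 : Matrix β β R)) * Uᴴ) := by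
  rw [← Matrix.one_mul (1 : Matrix β β R), mul_kronecker_mul, Matrix.one_mul]
  simp only [Matrix.mul_assoc]
  rw [← Matrix.mul_assoc Uᴴ U, hU2, Matrix.one_mul]

end PartialTrace

variable {nA nB nC nD : ℕ}

lemma smul_rhoRC_eq_sum_pauli_kronecker_traceRight
    (U : Matrix ((Fin nC → ZMod 2) × (Fin nD → ZMod 2))
      ((Fin nA → ZMod 2) × (Fin nB → ZMod 2)) ℂ) :
    ((2 : ℂ) ^ nA * (2 ^ nA * 2 ^ nB)) • rhoRC nA nB nC nD U =
      ∑ x, ∑ z, pauli x z ⊗ₖ traceRight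
        (U * (pauli x z ⊗ₖ (1 : Matrix (Fin nB → ZMod 2) (Fin nB → ZMod 2) ℂ)) * Uᴴ) := by
  ext ⟨a, c⟩ ⟨a', c'⟩
  simp only [Matrix.sum_apply, kroneckerMap_apply, traceRight_mul_kronecker_one_mul_conjTranspose,
    sum_pauli_apply_mul_sum_pauli_apply_mul, Matrix.smul_apply, smul_eq_mul, rhoRC,
    starRingEnd_apply]
  field_simp

lemma card_eq_of_unitary
    {U : Matrix ((Fin nC → ZMod 2) × (Fin nD → ZMod 2))
      ((Fin nA → ZMod 2) × (Fin nB → ZMod 2)) ℂ}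
    (hU1 : U * Uᴴ = 1) (hU2 : Uᴴ * U = 1) :
    (2 : ℂ) ^ nA * 2 ^ nB = 2 ^ nC * 2 ^ nD := by
  have h := trace_mul_comm U Uᴴ
  rw [hU1, hU2, trace_one, trace_one] at h
  simp only [Fintype.card_prod, Fintype.card_fun, Fintype.card_fin, ZMod.card] at h
  exact_mod_cast h.symm

/-- `(xc, zc)` and `(xd, zd)` are the symplectic labels of the paper's `Λ_C(P_A)` and `Λ_D(P_A)`,
and `c` is the phase. -/
def HasPauliImages
    (U : Matrix ((Fin nC → ZMod 2) × (Fin nD → ZMod 2))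
      ((Fin nA → ZMod 2) × (Fin nB → ZMod 2)) ℂ)
    (c : (Fin nA → ZMod 2) → (Fin nA → ZMod 2) → ℂ)
    (xc zc : (Fin nA → ZMod 2) → (Fin nA → ZMod 2) → (Fin nC → ZMod 2))
    (xd zd : (Fin nA → ZMod 2) → (Fin nA → ZMod 2) → (Fin nD → ZMod 2)) : Prop :=
  ∀ x z, U * (pauli x z ⊗ₖ (1 : Matrix (Fin nB → ZMod 2) (Fin nB → ZMod 2) ℂ)) * Uᴴ =
    c x z • (pauli (xc x z) (zc x z) ⊗ₖ pauli (xd x z) (zd x z))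

section HasPauliImages

variable
  {U : Matrix ((Fin nC → ZMod 2) × (Fin nD → ZMod 2)) ((Fin nA → ZMod 2) × (Fin nB → ZMod 2)) ℂ}
  {c : (Fin nA → ZMod 2) → (Fin nA → ZMod 2) → ℂ}
  {xc zc : (Fin nA → ZMod 2) → (Fin nA → ZMod 2) → (Fin nC → ZMod 2)}
  {xd zd : (Fin nA → ZMod 2) → (Fin nA → ZMod 2) → (Fin nD → ZMod 2)}

lemma HasPauliImages.map_zero (hU : HasPauliImages U c xc zc xd zd) (hU1 : U * Uᴴ = 1) :
    c 0 0 = 1 ∧ xc 0 0 = 0 ∧ zc 0 0 = 0 ∧ xd 0 0 = 0 ∧ zd 0 0 = 0 := by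
  have h := hU 0 0
  rw [pauli_zero, one_kronecker_one, Matrix.mul_one, hU1, ← one_smul ℂ (1 : Matrix _ _ ℂ),
    ← one_kronecker_one, ← pauli_zero, ← pauli_zero] at h
  obtain ⟨hxc, hzc, hxd, hzd, hc⟩ := smul_pauli_kronecker_pauli_inj one_ne_zero h
  exact ⟨hc.symm, hxc.symm, hzc.symm, hxd.symm, hzd.symm⟩

lemma HasPauliImages.map_add (hU : HasPauliImages U c xc zc xd zd) (hU2 : Uᴴ * U = 1)
    (hc : ∀ x z, c x z ≠ 0) (x z x' z' : Fin nA → ZMod 2) :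
    xd (x + x') (z + z') = xd x z + xd x' z' ∧ zd (x + x') (z + z') = zd x z + zd x' z' := by
  have hsum : pauli (x + x') (z + z') = pauliSign z x' • (pauli x z * pauli x' z') := by
    rw [pauli_mul, smul_smul, pauliSign_mul_self, one_smul]
  have h : c (x + x') (z + z') •
        (pauli (xc (x + x') (z + z')) (zc (x + x') (z + z')) ⊗ₖ
          pauli (xd (x + x') (z + z')) (zd (x + x') (z + z'))) =
      (pauliSign z x' * (c x z * c x' z') *
          (pauliSign (zc x z) (xc x' z') * pauliSign (zd x z) (xd x' z'))) •
        (pauli (xc x z + xc x' z') (zc x z + zc x' z') ⊗ₖ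
          pauli (xd x z + xd x' z') (zd x z + zd x' z')) := by
    rw [← hU, hsum, smul_kronecker, Matrix.mul_smul, Matrix.smul_mul,
      conj_mul_kronecker_one hU2, hU, hU, Matrix.smul_mul, Matrix.mul_smul,
      ← mul_kronecker_mul, pauli_mul, pauli_mul, smul_kronecker, kronecker_smul]
    simp only [smul_smul]
    ring_nf
  obtain ⟨-, -, hxd, hzd, -⟩ := smul_pauli_kronecker_pauli_inj (hc _ _) h
  exact ⟨hxd, hzd⟩

lemma HasPauliImages.traceRight_conj_pauli (hU : HasPauliImages U c xc zc xd zd)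
    (x z : Fin nA → ZMod 2) :
    traceRight (U * (pauli x z ⊗ₖ (1 : Matrix (Fin nB → ZMod 2) (Fin nB → ZMod 2) ℂ)) * Uᴴ) =
      if xd x z = 0 ∧ zd x z = 0 then (c x z * 2 ^ nD) • pauli (xc x z) (zc x z) else 0 := by
  rw [hU, traceRight_smul_kronecker, trace_pauli]
  split_ifs <;> simp

lemma HasPauliImages.rhoRC_eq_iff (hU : HasPauliImages U c xc zc xd zd) (hU1 : U * Uᴴ = 1)
    (hU2 : Uᴴ * U = 1) (hc : ∀ x z, c x z ≠ 0) :
    rhoRC nA nB nC nD U = ((2 ^ nA * 2 ^ nC : ℂ))⁻¹ • 1 ↔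
      ∀ x z, xd x z = 0 ∧ zd x z = 0 → x = 0 ∧ z = 0 := by
  have hscale : ((2 : ℂ) ^ nA * (2 ^ nA * 2 ^ nB)) • ((2 ^ nA * 2 ^ nC : ℂ))⁻¹ •
      (1 : Matrix ((Fin nA → ZMod 2) × (Fin nC → ZMod 2))
        ((Fin nA → ZMod 2) × (Fin nC → ZMod 2)) ℂ) = 1 ⊗ₖ ((2 : ℂ) ^ nD • 1) := by
    rw [kronecker_smul, one_kronecker_one, smul_smul, card_eq_of_unitary hU1 hU2]
    congr 1
    field_simp
  rw [← smul_right_inj (by simp : (2 : ℂ) ^ nA * (2 ^ nA * 2 ^ nB) ≠ 0), hscale,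
    smul_rhoRC_eq_sum_pauli_kronecker_traceRight, one_kronecker_eq_sum_pauli_kronecker]
  simp only [hU.traceRight_conj_pauli, sum_pauli_kronecker_inj]
  constructor
  · intro h x z hker
    by_contra h0
    have := congrFun (congrFun h x) z
    rw [if_pos hker, if_neg h0, smul_eq_zero] at this
    exact this.elim (mul_ne_zero (hc x z) (by simp)) (pauli_ne_zero _ _)
  · intro hker
    funext x z
    by_cases h0 : x = 0 ∧ z = 0
    · obtain ⟨rfl, rfl⟩ := h0
      obtain ⟨hc0, hxc, hzc, hxd, hzd⟩ := hU.map_zero hU1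
      simp [hc0, hxc, hzc, hxd, hzd, pauli_zero]
    · rw [if_neg (mt (hker x z) h0), if_neg h0]

lemma HasPauliImages.injective_iff (hU : HasPauliImages U c xc zc xd zd) (hU2 : Uᴴ * U = 1)
    (hc : ∀ x z, c x z ≠ 0) :
    Function.Injective (fun PA : (Fin nA → ZMod 2) × (Fin nA → ZMod 2) =>
        (xd PA.1 PA.2, zd PA.1 PA.2)) ↔
      ∀ x z, xd x z = 0 ∧ zd x z = 0 → x = 0 ∧ z = 0 := by
  let lambdaD :
      (Fin nA → ZMod 2) × (Fin nA → ZMod 2) →+ (Fin nD → ZMod 2) × (Fin nD → ZMod 2) :=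
    AddMonoidHom.mk' (fun PA => (xd PA.1 PA.2, zd PA.1 PA.2)) fun p q =>
      Prod.ext (hU.map_add hU2 hc p.1 p.2 q.1 q.2).1 (hU.map_add hU2 hc p.1 p.2 q.1 q.2).2
  simpa [lambdaD, Prod.ext_iff] using injective_iff_map_eq_zero lambdaD

end HasPauliImages

end HaydenPreskill

/-- Perfect decoupling `ρ_{RC} = (I_R/d_R) ⊗ (I_C/d_C)` holds iff the
forward time-evolution map `Λ_D : Pauli_A → Pauli_D` (mod phase) is
injective. -/
theorem stmt9 (nA nB nC nD : ℕ)
    (U : Matrix ((Fin nC → ZMod 2) × (Fin nD → ZMod 2))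
      ((Fin nA → ZMod 2) × (Fin nB → ZMod 2)) ℂ)
    (hU1 : U * Uᴴ = 1) (hU2 : Uᴴ * U = 1)
    (c : (Fin nA → ZMod 2) → (Fin nA → ZMod 2) → ℂ)
    (xc zc : (Fin nA → ZMod 2) → (Fin nA → ZMod 2) → (Fin nC → ZMod 2))
    (xd zd : (Fin nA → ZMod 2) → (Fin nA → ZMod 2) → (Fin nD → ZMod 2))
    (hClif : ∀ x z : Fin nA → ZMod 2, ‖c x z‖ = 1 ∧
      U * (pauli x z ⊗ₖ (1 : Matrix (Fin nB → ZMod 2) (Fin nB → ZMod 2) ℂ)) * Uᴴ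
        = c x z • (pauli (xc x z) (zc x z) ⊗ₖ pauli (xd x z) (zd x z))) :
    rhoRC nA nB nC nD U = ((2 ^ nA * 2 ^ nC : ℂ))⁻¹ • 1
      ↔ Function.Injective
          (fun PA : (Fin nA → ZMod 2) × (Fin nA → ZMod 2) =>
            (xd PA.1 PA.2, zd PA.1 PA.2)) := by
  have hU : HaydenPreskill.HasPauliImages U c xc zc xd zd := fun x z => (hClif x z).2
  have hc : ∀ x z, c x z ≠ 0 := fun x z => norm_ne_zero_iff.mp (by simp [(hClif x z).1])
  exact (hU.rhoRC_eq_iff hU1 hU2 hc).trans (hU.injective_iff hU2 hc).symm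
end
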